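/- Let a, b ∈ [0,1] with a < b, let α ∈ [0,1], and let λ = α·δ_a + (1−α)·δ_b. Then Vλ = α₁·δ_a + (1−α₁)·δ_b, where α₁ = α(α + 2p(1−α)) and 1 − α₁ = (1−α)(1−α + 2qα). -/
import Mathlib


open MeasureTheory Set Filter Topology ENNReal

/-- The unit interval `[0,1]` as a measurable space (with the Borel σ-algebra). -/
abbrev UnitInt : Type := ↥(Set.Icc (0:ℝ) 1)

/-- The family of measures `P(x,y,·)`: `p·δ_x + q·δ_y` if `x < y`, `δ_x` if `x = y`,
and `p·δ_y + q·δ_x` if `x > y`. -/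
noncomputable def Pker (p q : ℝ) (x y : UnitInt) : Measure UnitInt :=
  if x < y then ENNReal.ofReal p • Measure.dirac x + ENNReal.ofReal q • Measure.dirac y
  else if y < x then ENNReal.ofReal p • Measure.dirac y + ENNReal.ofReal q • Measure.dirac x
  else Measure.dirac x
/-- for λ = α·δ_a + (1−α)·δ_b with a < b and α ∈ [0,1], one has
Vλ = α₁·δ_a + (1−α₁)·δ_b where α₁ = α(α + 2p(1−α)) and 1 − α₁ = (1−α)(1−α + 2qα). -/
theorem V_two_point_measure (p q : ℝ) (hp : 0 ≤ p) (hq : 0 ≤ q) (hpq : p + q = 1)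
    (V : Measure UnitInt → Measure UnitInt)
    (hV : ∀ (μ : Measure UnitInt) (A : Set UnitInt), MeasurableSet A →
      V μ A = ∫⁻ x, ∫⁻ y, Pker p q x y A ∂μ ∂μ)
    (a b : UnitInt) (hab : a < b) (α : ℝ) (hα : α ∈ Set.Icc (0:ℝ) 1) :
    V (ENNReal.ofReal α • Measure.dirac a + ENNReal.ofReal (1 - α) • Measure.dirac b)
      = ENNReal.ofReal (α * (α + 2*p*(1 - α))) • Measure.dirac a
        + ENNReal.ofReal ((1 - α) * (1 - α + 2*q*α)) • Measure.dirac b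
    ∧ 1 - α * (α + 2*p*(1 - α)) = (1 - α) * (1 - α + 2*q*α) := by

  obtain ⟨h0, h1⟩ := hα
  have hb0 : (0:ℝ) ≤ 1 - α := by linarith
  constructor
  · ext A hA
    rw [hV _ A hA]
    have hd : ∀ f : UnitInt → ℝ≥0∞,
        ∫⁻ x, f x ∂(ENNReal.ofReal α • Measure.dirac a
          + ENNReal.ofReal (1 - α) • Measure.dirac b)
        = ENNReal.ofReal α * f a + ENNReal.ofReal (1 - α) * f b := by
      intro f
      simp [lintegral_add_measure, lintegral_smul_measure, lintegral_dirac]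
    rw [hd, hd, hd]
    have hPaa : Pker p q a a = Measure.dirac a := by simp [Pker]
    have hPbb : Pker p q b b = Measure.dirac b := by simp [Pker]
    have hPab : Pker p q a b
        = ENNReal.ofReal p • Measure.dirac a + ENNReal.ofReal q • Measure.dirac b := by
      simp [Pker, hab]
    have hPba : Pker p q b a
        = ENNReal.ofReal p • Measure.dirac a + ENNReal.ofReal q • Measure.dirac b := by
      simp [Pker, hab, not_lt_of_gt hab]
    rw [hPaa, hPbb, hPab, hPba]
    have e1 : ENNReal.ofReal (α * (α + 2*p*(1 - α)))
        = ENNReal.ofReal α * ENNReal.ofReal α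
          + 2 * ENNReal.ofReal α * ENNReal.ofReal p * ENNReal.ofReal (1 - α) := by
      rw [ENNReal.ofReal_mul h0, ENNReal.ofReal_add h0 (by positivity),
        ENNReal.ofReal_mul (by positivity), ENNReal.ofReal_mul (by norm_num)]
      norm_num
      ring
    have e2 : ENNReal.ofReal ((1 - α) * (1 - α + 2*q*α))
        = ENNReal.ofReal (1 - α) * ENNReal.ofReal (1 - α)
          + 2 * ENNReal.ofReal (1 - α) * ENNReal.ofReal q * ENNReal.ofReal α := by
      rw [ENNReal.ofReal_mul hb0, ENNReal.ofReal_add hb0 (by positivity),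
        ENNReal.ofReal_mul (by positivity), ENNReal.ofReal_mul (by norm_num)]
      norm_num
      ring
    simp only [Measure.coe_add, Measure.coe_smul, Pi.add_apply, Pi.smul_apply,
      smul_eq_mul, e1, e2]
    ring
  · have hq' : q = 1 - p := by linarith
    subst hq'
    ring
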